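/- For all ordinals α below ε₀ (in Cantor normal form) with α ≠ 0 and all x ∈ ℕ, the length hierarchy satisfies h_α(x) = 1 + h_{P_x(α)}(h(x)), where P_x is the x-indexed predecessor and h is any fixed control function. -/

import Mathlib

/-- Ordinal terms below ε₀: a term is a list of exponents,
`cons β γ` denoting ω^β + γ. -/
inductive OT : Type
  | nil : OT
  | cons : OT → OT → OT
deriving DecidableEq

namespace OT

/-- The term 1 = ω^0. -/
def one : OT := cons nil nil

/-- Syntactic concatenation (direct sum) of ordinal terms. -/
def add : OT → OT → OT
  | nil, b => b
  | cons e r, b => cons e (add r b)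

/-- A term ω^{β₁}+...+ω^{β_m} is a successor iff m > 0 and β_m = 0. -/
def isSucc : OT → Bool
  | nil => false
  | cons e nil => e == nil
  | cons _ (cons e r) => isSucc (cons e r)

/-- Remove the last summand ω^0 of a successor term. -/
def pred : OT → OT
  | nil => nil
  | cons _ nil => nil
  | cons e (cons e' r) => cons e (pred (cons e' r))

/-- Limit terms. -/
def isLim (a : OT) : Prop := a ≠ nil ∧ isSucc a = false

/-- ω^β · n as an ordinal term. -/
def rep : ℕ → OT → OT
  | 0, _ => nil
  | n + 1, β => cons β (rep n β)

/-- The standard assignment of fundamental sequences (with ω_x = x+1):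
(γ+ω^{β+1})_x = γ+ω^β·(x+1) and (γ+ω^λ)_x = γ+ω^{λ_x}. -/
def fseq : OT → ℕ → OT
  | nil, _ => nil
  | cons β nil, x =>
      if β = nil then nil
      else if isSucc β then rep (x + 1) (pred β)
      else cons (fseq β x) nil
  | cons β (cons e r), x => cons β (fseq (cons e r) x)

/-- Syntactic ordering of terms (on CNF terms this is the ordinal ordering). -/
def lt : OT → OT → Prop
  | _, nil => False
  | nil, cons _ _ => True
  | cons a r, cons b s => lt a b ∨ (a = b ∧ lt r s)

def le (a b : OT) : Prop := lt a b ∨ a = b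

/-- Cantor normal form: exponents weakly decreasing, all in CNF. -/
def isCNF : OT → Prop
  | nil => True
  | cons b nil => isCNF b
  | cons b (cons e r) => isCNF b ∧ le e b ∧ isCNF (cons e r)

/-- Number of occurrences of the exponent β in a term. -/
def count (β : OT) : OT → ℕ
  | nil => 0
  | cons b r => (if b = β then 1 else 0) + count β r

/-- k-lean: every coefficient (at every level) is ≤ k. -/
def leanOrd (k : ℕ) : OT → Prop
  | nil => True
  | cons b r => count b (cons b r) ≤ k ∧ leanOrd k b ∧ leanOrd k r

end OT

/-- Pointwise-at-x ordering: smallest transitive relation with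
α ⊏_x α+1 and λ_x ⊏_x λ. -/
inductive Ptw (x : ℕ) : OT → OT → Prop
  | succ (a : OT) : Ptw x a (OT.add a OT.one)
  | lim (l : OT) : OT.isLim l → Ptw x (OT.fseq l x) l
  | trans {a b c : OT} : Ptw x a b → Ptw x b c → Ptw x a c

/-! Read as an ordinal, `λ_x < λ` for every limit term `λ`, even one not in Cantor normal form.
Hence iterating `λ ↦ λ_x` from a nonzero term reaches a successor term `α + 1` after finitely many
steps; these steps change neither `h_λ(x)` nor `P_x(λ)`, and at `α + 1` the identity is the
defining equation of `h_{α+1}`. -/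

namespace OT

noncomputable def toOrdinal : OT → Ordinal.{0}
  | .nil => 0
  | .cons b r => Ordinal.omega0 ^ toOrdinal b + toOrdinal r

theorem toOrdinal_pred : ∀ a : OT, isSucc a = true → toOrdinal a = toOrdinal (pred a) + 1
  | .nil, h => by simp [isSucc] at h
  | .cons b .nil, h => by
      obtain rfl : b = nil := by simpa [isSucc] using h
      simp [toOrdinal, pred]
  | .cons b (.cons e r), h => by
      have ih := toOrdinal_pred (cons e r) (by simpa [isSucc] using h)
      simp only [toOrdinal, pred] at ih ⊢
      rw [ih, add_assoc]

theorem toOrdinal_rep (β : OT) (n : ℕ) :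
    toOrdinal (rep n β) = Ordinal.omega0 ^ toOrdinal β * n := by
  induction n with
  | zero => simp [rep, toOrdinal]
  | succ n ih =>
    rw [rep, toOrdinal, ih, show (n + 1 : ℕ) = 1 + n by omega, Nat.cast_add, Nat.cast_one, mul_add,
      mul_one]

theorem ne_nil_of_isLim_cons_nil {b : OT} (hl : isLim (cons b nil)) : b ≠ nil := by
  rintro rfl
  simp [isLim, isSucc] at hl

theorem toOrdinal_fseq_lt (x : ℕ) {a : OT} (hl : isLim a) : toOrdinal (fseq a x) < toOrdinal a := by
  induction a with
  | nil => exact absurd rfl hl.1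
  | cons b r ihb ihr =>
    cases r with
    | nil =>
      have hb := ne_nil_of_isLim_cons_nil hl
      by_cases hsb : isSucc b = true
      · rw [fseq, if_neg hb, if_pos hsb, toOrdinal_rep, toOrdinal, toOrdinal, add_zero,
          toOrdinal_pred b hsb, Ordinal.opow_add, Ordinal.opow_one]
        exact mul_lt_mul_of_pos_left (Ordinal.natCast_lt_omega0 (x + 1))
          (Ordinal.opow_pos _ Ordinal.omega0_pos)
      · rw [fseq, if_neg hb, if_neg hsb]
        simp only [toOrdinal, add_zero]
        exact (Ordinal.opow_lt_opow_iff_right Ordinal.one_lt_omega0).2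
          (ihb ⟨hb, by simpa using hsb⟩)
    | cons e r' =>
      simp only [fseq, toOrdinal]
      exact (add_lt_add_iff_left _).2 (ihr ⟨by simp, by simpa [isSucc] using hl.2⟩)

theorem fseq_ne_nil (x : ℕ) {a : OT} (hl : isLim a) : fseq a x ≠ nil := by
  cases a with
  | nil => exact absurd rfl hl.1
  | cons b r =>
    cases r with
    | nil =>
      have hb := ne_nil_of_isLim_cons_nil hl
      by_cases hsb : isSucc b = true <;> simp [fseq, hb, hsb, rep]
    | cons e r' => simp [fseq]

theorem fseq_induction (x : ℕ) {motive : OT → Prop}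
    (succ : ∀ a, isSucc a = true → motive a)
    (lim : ∀ a, isLim a → motive (fseq a x) → motive a) :
    ∀ a, a ≠ nil → motive a := by
  intro a
  induction a using (InvImage.wf toOrdinal wellFounded_lt).induction with
  | _ a ih =>
    intro ha
    by_cases hs : isSucc a = true
    · exact succ a hs
    · have hl : isLim a := ⟨ha, by simpa using hs⟩
      exact lim a hl (ih _ (toOrdinal_fseq_lt x hl) (fseq_ne_nil x hl))

end OT

theorem stmt11_general (h : ℕ → ℕ) (L : OT → ℕ → ℕ) (P : ℕ → OT → OT)
    (hLs : ∀ a x, OT.isSucc a = true → L a x = 1 + L (OT.pred a) (h x))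
    (hLl : ∀ a x, OT.isLim a → L a x = L (OT.fseq a x) x)
    (hPs : ∀ x a, OT.isSucc a = true → P x a = OT.pred a)
    (hPl : ∀ x a, OT.isLim a → P x a = P x (OT.fseq a x)) :
    ∀ (a : OT) (x : ℕ), a ≠ OT.nil → L a x = 1 + L (P x a) (h x) := by
  intro a x
  refine OT.fseq_induction x (motive := fun a => L a x = 1 + L (P x a) (h x))
    (fun a hs => ?_) (fun a hl ih => ?_) a
  · rw [hLs a x hs, hPs x a hs]
  · rw [hLl a x hl, hPl x a hl, ih]

/-- For every α ≠ 0 below ε₀ and x : h_α(x) = 1 + h_{P_x(α)}(h(x)), where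
`L` is the length hierarchy built from the control `h` and `P` the
x-indexed predecessor (both characterized by their defining equations). -/
theorem stmt11 (h : ℕ → ℕ) (L : OT → ℕ → ℕ) (P : ℕ → OT → OT)
    (hL0 : ∀ x, L OT.nil x = 0)
    (hLs : ∀ a x, OT.isSucc a = true → L a x = 1 + L (OT.pred a) (h x))
    (hLl : ∀ a x, OT.isLim a → L a x = L (OT.fseq a x) x)
    (hPs : ∀ x a, OT.isSucc a = true → P x a = OT.pred a)
    (hPl : ∀ x a, OT.isLim a → P x a = P x (OT.fseq a x)) :
    ∀ (a : OT) (x : ℕ), a ≠ OT.nil → L a x = 1 + L (P x a) (h x) :=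
  stmt11_general h L P hLs hLl hPs hPl
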